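/- arXiv:alg-geom/9605002 — 2 statements merged into one kernel-verified Lean document; each statement's English description precedes it below -/
import Mathlib

section
/- Let $m = 4$ and suppose semi-invariant coordinates $x_1, x_2, x_3, x_4$ have weights $\mathrm{wt}(x_1, x_2, x_3, x_4) \equiv (a, -a, b, 2) \pmod 4$ with $a, b$ odd, and orders $a_i = \mathrm{ord}(x_i)$ along a curve, satisfying: (1) $a_i \equiv \mathrm{wt}(x_i) \pmod 2$ (subindex $m̄ = 2$), (2) there exists an invariant monomial $\psi$ in the $x_i$ with $\mathrm{ord}(\psi) = 2$, (3) normalizedness: there is no semi-invariant monomial $y$ with $\mathrm{wt}(y) \equiv \mathrm{wt}(x_i) \pmod 4$ and $\mathrm{ord}(y) < a_i$, and (4) $\mathrm{wt}(x_i) \not\equiv 0 \pmod 4$ for $i = 1, 2, 3$ while $\mathrm{wt}(x_4) \equiv 2 \pmod 4$. Then, after possibly permuting $x_1, x_2$, one has $a_1 = a_2 = a_3 = 1$ and $a_4 = 2$. -/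
open Finset

/-- Lemma for an imprimitive point of type `cAx/4` on a Mori conic bundle:
with `m = 4`, semi-invariant coordinates of weights `(a, -a, b, 2) (mod 4)`
(`a`, `b` odd) and orders `ordx i` along the curve satisfying
(1) `ordx i ≡ wt xᵢ (mod 2)` (subindex `m̄ = 2`),
(2) some invariant monomial has order `2`,
(3) normalizedness (no semi-invariant monomial of the same weight as `xᵢ` and
smaller order), one has `ord(x₁) = ord(x₂) = ord(x₃) = 1` and `ord(x₄) = 2`. -/
theorem stmt_8 (a b : ℤ) (ha : Odd a) (hb : Odd b)
    (w : Fin 4 → ℤ)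
    (hw0 : w 0 ≡ a [ZMOD 4]) (hw1 : w 1 ≡ -a [ZMOD 4])
    (hw2 : w 2 ≡ b [ZMOD 4]) (hw3 : w 3 ≡ 2 [ZMOD 4])
    (ordx : Fin 4 → ℕ) (hpos : ∀ i, 0 < ordx i)
    (hparity : ∀ i, (ordx i : ℤ) ≡ w i [ZMOD 2])
    (hinv : ∃ e : Fin 4 → ℕ,
      (∑ i, (e i : ℤ) * w i) ≡ 0 [ZMOD 4] ∧ ∑ i, e i * ordx i = 2)
    (hnorm : ∀ i, ∀ e : Fin 4 → ℕ,
      (∑ j, (e j : ℤ) * w j) ≡ w i [ZMOD 4] → ordx i ≤ ∑ j, e j * ordx j) :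
    ordx 0 = 1 ∧ ordx 1 = 1 ∧ ordx 2 = 1 ∧ ordx 3 = 2 := by

  have ha' := Int.odd_iff.mp ha
  have hb' := Int.odd_iff.mp hb
  rw [Int.modEq_iff_dvd] at hw0 hw1 hw2 hw3
  have hp0 := Int.modEq_iff_dvd.mp (hparity 0)
  have hp1 := Int.modEq_iff_dvd.mp (hparity 1)
  have hp2 := Int.modEq_iff_dvd.mp (hparity 2)
  have hp3 := Int.modEq_iff_dvd.mp (hparity 3)
  have o0 := hpos 0; have o1 := hpos 1; have o2 := hpos 2; have o3 := hpos 3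
  -- parities of the orders
  have po0 : ordx 0 % 2 = 1 := by omega
  have po1 : ordx 1 % 2 = 1 := by omega
  have po2 : ordx 2 % 2 = 1 := by omega
  have po3 : ordx 3 % 2 = 0 := by omega
  obtain ⟨e, hew, heo⟩ := hinv
  rw [Fin.sum_univ_four] at heo
  rw [Fin.sum_univ_four, Int.modEq_iff_dvd] at hew
  -- e 3 = 0
  have he3 : e 3 = 0 := by
    by_contra h
    have h1' : ordx 3 ≤ e 3 * ordx 3 := Nat.le_mul_of_pos_left _ (Nat.pos_of_ne_zero h)
    have he0 : e 0 = 0 := by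
      rcases Nat.mul_eq_zero.mp (show e 0 * ordx 0 = 0 by omega) with h' | h' <;> omega
    have he1 : e 1 = 0 := by
      rcases Nat.mul_eq_zero.mp (show e 1 * ordx 1 = 0 by omega) with h' | h' <;> omega
    have he2 : e 2 = 0 := by
      rcases Nat.mul_eq_zero.mp (show e 2 * ordx 2 = 0 by omega) with h' | h' <;> omega
    have ho3 : ordx 3 = 2 := by omega
    have he31 : e 3 = 1 := by rw [ho3] at h1' heo; omega
    rw [he0, he1, he2, he31] at hew
    push_cast at hew
    omega
  have ht3 : e 3 * ordx 3 = 0 := by rw [he3]; ring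
  -- structure of an exponent with odd order
  have aux : ∀ k o : ℕ, 0 < o → o % 2 = 1 → k * o ≤ 2 →
      (k = 0 ∧ k * o = 0) ∨ (k = 1 ∧ o = 1 ∧ k * o = 1) ∨
      (k = 2 ∧ o = 1 ∧ k * o = 2) := by
    intro k o ho hodd hle
    rcases Nat.eq_zero_or_pos k with h | h
    · left; exact ⟨h, by rw [h]; ring⟩
    · have l1 : o ≤ k * o := Nat.le_mul_of_pos_left _ h
      have l2 : k ≤ k * o := Nat.le_mul_of_pos_right _ ho
      have ho1 : o = 1 := by omega
      rw [ho1, Nat.mul_one] at *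
      omega
  have c0 := aux (e 0) (ordx 0) o0 po0 (by omega)
  have c1 := aux (e 1) (ordx 1) o1 po1 (by omega)
  have c2 := aux (e 2) (ordx 2) o2 po2 (by omega)
  -- main case analysis
  have main : (e 0 = 1 ∧ e 1 = 1 ∧ e 2 = 0 ∧ ordx 0 = 1 ∧ ordx 1 = 1) ∨
      (e 0 = 1 ∧ e 1 = 0 ∧ e 2 = 1 ∧ ordx 0 = 1 ∧ ordx 2 = 1) ∨
      (e 0 = 0 ∧ e 1 = 1 ∧ e 2 = 1 ∧ ordx 1 = 1 ∧ ordx 2 = 1) ∨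
      (e 0 = 2 ∧ e 1 = 0 ∧ e 2 = 0) ∨
      (e 0 = 0 ∧ e 1 = 2 ∧ e 2 = 0) ∨
      (e 0 = 0 ∧ e 1 = 0 ∧ e 2 = 2) := by
    clear hw0 hw1 hw2 hw3 hp0 hp1 hp2 hp3 hew ha' hb' ha hb hnorm hparity
    rcases c0 with ⟨u1, u2⟩ | ⟨u1, u2, u3⟩ | ⟨u1, u2, u3⟩ <;>
      rcases c1 with ⟨v1, v2⟩ | ⟨v1, v2, v3⟩ | ⟨v1, v2, v3⟩ <;>
      rcases c2 with ⟨x1, x2⟩ | ⟨x1, x2, x3⟩ | ⟨x1, x2, x3⟩ <;>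
      omega
  -- normalizedness consequences
  have n30 : (4:ℤ) ∣ 2 * w 0 - w 3 → ordx 3 ≤ 2 * ordx 0 := by
    intro hd
    have := hnorm 3 ![2, 0, 0, 0] (by
      rw [Fin.sum_univ_four, Int.modEq_iff_dvd]
      simp only [Matrix.cons_val_zero, Matrix.cons_val_one, Matrix.head_cons,
        Matrix.cons_val_two, Matrix.tail_cons, Matrix.cons_val_three]
      push_cast
      omega)
    rw [Fin.sum_univ_four] at this
    simpa using this
  have n31 : (4:ℤ) ∣ 2 * w 1 - w 3 → ordx 3 ≤ 2 * ordx 1 := by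
    intro hd
    have := hnorm 3 ![0, 2, 0, 0] (by
      rw [Fin.sum_univ_four, Int.modEq_iff_dvd]
      simp only [Matrix.cons_val_zero, Matrix.cons_val_one, Matrix.head_cons,
        Matrix.cons_val_two, Matrix.tail_cons, Matrix.cons_val_three]
      push_cast
      omega)
    rw [Fin.sum_univ_four] at this
    simpa using this
  have ns0 : ∀ i : Fin 4, (4:ℤ) ∣ w 0 - w i → ordx i ≤ ordx 0 := by
    intro i hd
    have := hnorm i ![1, 0, 0, 0] (by
      rw [Fin.sum_univ_four, Int.modEq_iff_dvd]
      simp only [Matrix.cons_val_zero, Matrix.cons_val_one, Matrix.head_cons,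
        Matrix.cons_val_two, Matrix.tail_cons, Matrix.cons_val_three]
      push_cast
      omega)
    rw [Fin.sum_univ_four] at this
    simpa using this
  have ns1 : ∀ i : Fin 4, (4:ℤ) ∣ w 1 - w i → ordx i ≤ ordx 1 := by
    intro i hd
    have := hnorm i ![0, 1, 0, 0] (by
      rw [Fin.sum_univ_four, Int.modEq_iff_dvd]
      simp only [Matrix.cons_val_zero, Matrix.cons_val_one, Matrix.head_cons,
        Matrix.cons_val_two, Matrix.tail_cons, Matrix.cons_val_three]
      push_cast
      omega)
    rw [Fin.sum_univ_four] at this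
    simpa using this
  have ns2 : ∀ i : Fin 4, (4:ℤ) ∣ w 2 - w i → ordx i ≤ ordx 2 := by
    intro i hd
    have := hnorm i ![0, 0, 1, 0] (by
      rw [Fin.sum_univ_four, Int.modEq_iff_dvd]
      simp only [Matrix.cons_val_zero, Matrix.cons_val_one, Matrix.head_cons,
        Matrix.cons_val_two, Matrix.tail_cons, Matrix.cons_val_three]
      push_cast
      omega)
    rw [Fin.sum_univ_four] at this
    simpa using this
  rcases main with ⟨f0, f1, f2, g0, g1⟩ | ⟨f0, f1, f2, g0, g2⟩ |
      ⟨f0, f1, f2, g1, g2⟩ | ⟨f0, f1, f2⟩ | ⟨f0, f1, f2⟩ | ⟨f0, f1, f2⟩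
  · -- x0 x1 case
    have h3 : ordx 3 ≤ 2 * ordx 0 := n30 (by omega)
    have hab : (4:ℤ) ∣ a - b ∨ (4:ℤ) ∣ a + b := by omega
    rcases hab with hd | hd
    · have := ns0 2 (by omega)
      omega
    · have := ns1 2 (by omega)
      omega
  · -- x0 x2 case
    rw [f0, f1, f2, he3] at hew
    push_cast at hew
    have h3 : ordx 3 ≤ 2 * ordx 0 := n30 (by omega)
    have := ns2 1 (by omega)
    omega
  · -- x1 x2 case
    rw [f0, f1, f2, he3] at hew
    push_cast at hew
    have h3 : ordx 3 ≤ 2 * ordx 1 := n31 (by omega)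
    have := ns2 0 (by omega)
    omega
  · rw [f0, f1, f2, he3] at hew; push_cast at hew; omega
  · rw [f0, f1, f2, he3] at hew; push_cast at hew; omega
  · rw [f0, f1, f2, he3] at hew; push_cast at hew; omega
end

section
/- Consider the parametrized curves $C^\sharp(1), C^\sharp(2) \subset \mathbb{C}^4$ given by $t \mapsto (t, t^{m̄-1}, t^{m̄+1}, t^{m̄})$ and $t \mapsto (\zeta t, \zeta^{-1} t^{m̄-1}, \zeta^{m̄+1} t^{m̄+1}, t^{m̄})$ for $\zeta$ a primitive $2m̄$-th root of unity (i.e., the image of the first curve under the action of $\mathbb{Z}/2m̄$ with weights $(1, -1, m̄+1, 0)$), for an even integer $m̄ \geq 2$. Then the union $C^\sharp = C^\sharp(1) \cup C^\sharp(2)$ is set-theoretically the common zero locus of the three polynomials $x_1 x_2 - x_4$, $x_3 - x_1^{m̄+1}$, and $x_2^2 - x_1^{2m̄-2}$. -/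
/-- Section 4.6 of the paper (case 4.3.2(i)): for even `m̄ ≥ 2` and `ζ` a
primitive `2m̄`-th root of unity, the union of the two parametrized curves
`t ↦ (t, t^{m̄-1}, t^{m̄+1}, t^{m̄})` and
`t ↦ (ζt, ζ⁻¹t^{m̄-1}, ζ^{m̄+1}t^{m̄+1}, t^{m̄})` in `ℂ⁴` is set-theoretically
the common zero locus of `x₁x₂ - x₄`, `x₃ - x₁^{m̄+1}` and `x₂² - x₁^{2m̄-2}`. -/
theorem stmt_15 (mbar : ℕ) (hmbar : 2 ≤ mbar) (heven : Even mbar)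
    (ζ : ℂ) (hζ : IsPrimitiveRoot ζ (2 * mbar)) :
    (Set.range (fun t : ℂ => ![t, t ^ (mbar - 1), t ^ (mbar + 1), t ^ mbar]) ∪
      Set.range (fun t : ℂ =>
        ![ζ * t, ζ⁻¹ * t ^ (mbar - 1), ζ ^ (mbar + 1) * t ^ (mbar + 1), t ^ mbar]))
    = {p : Fin 4 → ℂ |
        p 0 * p 1 - p 3 = 0 ∧
        p 2 - p 0 ^ (mbar + 1) = 0 ∧
        p 1 ^ 2 - p 0 ^ (2 * mbar - 2) = 0} := by
  obtain ⟨n, rfl⟩ : ∃ n, mbar = n + 2 := ⟨mbar - 2, by omega⟩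
  have hζ0 : ζ ≠ 0 := hζ.ne_zero (by omega)
  have hζ2m : ζ ^ (2 * (n + 2)) = 1 := hζ.pow_eq_one
  have hζm : ζ ^ (n + 2) = -1 := by
    have hsq : ζ ^ (n + 2) * ζ ^ (n + 2) = 1 := by
      rw [← pow_add, show n + 2 + (n + 2) = 2 * (n + 2) by ring]; exact hζ2m
    rcases mul_self_eq_one_iff.mp hsq with h | h
    · exact absurd h (hζ.pow_ne_one_of_pos_of_lt (by omega) (by omega))
    · exact h
  have hsub1 : n + 2 - 1 = n + 1 := rfl
  have hsub2 : 2 * (n + 2) - 2 = 2 * n + 2 := by omega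
  have hinvm : (ζ⁻¹) ^ (n + 2) = -1 := by
    rw [inv_pow, hζm]; norm_num
  ext p
  simp only [Set.mem_union, Set.mem_range, Set.mem_setOf_eq]
  constructor
  · rintro (⟨t, rfl⟩ | ⟨t, rfl⟩) <;>
      simp only [Matrix.cons_val_zero, Matrix.cons_val_one, Matrix.head_cons,
        Matrix.cons_val_two, Matrix.tail_cons, Matrix.cons_val_three, hsub1, hsub2] <;>
      refine ⟨?_, ?_, ?_⟩
    · ring
    · ring
    · ring
    · field_simp; ring
    · rw [mul_pow]; ring
    · rw [mul_pow, mul_pow]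
      have hz : (ζ⁻¹) ^ 2 = ζ ^ (2 * n + 2) := by
        have hone : ζ ^ (2 * n + 2) * ζ ^ 2 = 1 := by
          rw [← pow_add, show 2 * n + 2 + 2 = 2 * (n + 2) by ring]; exact hζ2m
        field_simp
        linear_combination -hone
      rw [hz]; ring
  · rintro ⟨h0, h1, h2⟩
    rw [hsub2, show 2 * n + 2 = (n + 1) * 2 by ring, pow_mul] at h2
    have h2' : (p 1 - p 0 ^ (n + 1)) * (p 1 + p 0 ^ (n + 1)) = 0 := by
      linear_combination h2
    rcases mul_eq_zero.mp h2' with hb | hb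
    · left
      refine ⟨p 0, ?_⟩
      funext i
      fin_cases i
      · show p 0 = p 0
        rfl
      · show p 0 ^ (n + 2 - 1) = p 1
        rw [hsub1]; linear_combination -hb
      · show p 0 ^ (n + 2 + 1) = p 2
        linear_combination -h1
      · show p 0 ^ (n + 2) = p 3
        linear_combination h0 - p 0 * hb
    · right
      refine ⟨ζ⁻¹ * p 0, ?_⟩
      funext i
      fin_cases i
      · show ζ * (ζ⁻¹ * p 0) = p 0
        rw [← mul_assoc, mul_inv_cancel₀ hζ0, one_mul]
      · show ζ⁻¹ * (ζ⁻¹ * p 0) ^ (n + 2 - 1) = p 1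
        rw [hsub1, mul_pow, ← mul_assoc, ← pow_succ', inv_pow, hζm]
        rw [inv_neg, inv_one]
        linear_combination -hb
      · show ζ ^ (n + 2 + 1) * (ζ⁻¹ * p 0) ^ (n + 2 + 1) = p 2
        rw [mul_pow, ← mul_assoc, ← mul_pow, mul_inv_cancel₀ hζ0, one_pow, one_mul]
        linear_combination -h1
      · show (ζ⁻¹ * p 0) ^ (n + 2) = p 3
        rw [mul_pow, hinvm]
        linear_combination h0 - p 0 * hb
end
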